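/- Let f = (1/n)∑_{i=1}^n f_i where each f_i : ℝ^d → ℝ is convex and L-smooth, with ∇f_i(x) supported on T_i for all x (meaning P_i ∇f_i(x) = ∇f_i(x)). Let D, D_i be as in the sparse estimator construction, and for fixed y, x̃ ∈ ℝ^d define G_i = ∇f_i(y) - ∇f_i(x̃) + D_i ∇f(x̃). Then (1/n)∑_{i=1}^n ‖G_i - ∇f(y)‖² ≤ 2L( f(x̃) - f(y) - ⟨∇f(y), x̃ - y⟩ ) - ‖∇f(y)‖² + 2⟨∇f(y), D ∇f(x̃)⟩ - ⟨∇f(x̃), D ∇f(x̃)⟩. -/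

import Mathlib

/-! Write `G_i - ∇f(y) = a_i + D_i ∇f(x̃) - ∇f(y)` with `a_i = ∇f_i(y) - ∇f_i(x̃)`. Coordinatewise, `a_i`
vanishes off `T_i`, the `P_i` are idempotent and `D (1/n) ∑ P_i = I`, so the cross terms average out
exactly and the left side equals
`(1/n) ∑ ‖a_i‖² + 2⟨∇f(y), D∇f(x̃)⟩ - ⟨∇f(x̃), D∇f(x̃)⟩ - ‖∇f(y)‖²`.
The remaining average is bounded by co-coercivity of gradients of convex `L`-smooth functions,
`‖∇g(x) - ∇g(y)‖² ≤ 2L (g x - g y - ⟨∇g(y), x - y⟩)`, which follows by combining the descent lemma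
and the first-order convexity inequality at the gradient step `x - L⁻¹ (∇g(x) - ∇g(y))`. -/

open scoped RealInnerProductSpace NNReal

section Bregman

variable {E : Type*} [NormedAddCommGroup E] [InnerProductSpace ℝ E] [CompleteSpace E]
  {f : E → ℝ} {g : E → E}

def bregman (f : E → ℝ) (g : E → E) (x y : E) : ℝ := f x - f y - ⟪g y, x - y⟫

theorem HasGradientAt.hasDerivAt_comp_add_smul {g' a v : E} {t : ℝ}
    (hf : HasGradientAt f g' (a + t • v)) :
    HasDerivAt (fun s : ℝ => f (a + s • v)) ⟪g', v⟫ t := by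
  have hline : HasDerivAt (fun s : ℝ => a + s • v) v t := by
    simpa using ((hasDerivAt_id t).smul_const v).const_add a
  exact (by simpa [InnerProductSpace.toDual_apply_apply] using
    hf.hasFDerivAt.comp_hasDerivAt t hline : HasDerivAt (f ∘ fun s : ℝ => a + s • v) ⟪g', v⟫ t)

theorem ConvexOn.add_inner_le_of_hasGradientAt (hf : ConvexOn ℝ Set.univ f) {g' y : E}
    (hg : HasGradientAt f g' y) (x : E) : f y + ⟪g', x - y⟫ ≤ f x := by
  have hline : ConvexOn ℝ Set.univ (fun t : ℝ => f (y + t • (x - y))) := by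
    have := hf.comp_affineMap (AffineMap.lineMap y x)
    simp only [Set.preimage_univ] at this
    exact this.congr fun t _ => by simp [AffineMap.lineMap_apply, add_comm]
  have hd : HasDerivAt (fun t : ℝ => f (y + t • (x - y))) ⟪g', x - y⟫ 0 :=
    (by simpa using hg : HasGradientAt f g' (y + (0 : ℝ) • (x - y))).hasDerivAt_comp_add_smul
  have := hline.le_slope_of_hasDerivAt (Set.mem_univ 0) (Set.mem_univ 1) one_pos hd
  simp only [slope_def_field, one_smul, add_sub_cancel, zero_smul, add_zero, sub_zero,
    div_one] at this
  linarith

theorem bregman_nonneg (hf : ConvexOn ℝ Set.univ f) (hg : ∀ x, HasGradientAt f (g x) x)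
    (x y : E) : 0 ≤ bregman f g x y := by
  have := hf.add_inner_le_of_hasGradientAt (hg y) x
  rw [bregman]
  linarith

theorem bregman_le_of_lipschitzWith {K : ℝ≥0} (hg : ∀ x, HasGradientAt f (g x) x)
    (hK : LipschitzWith K g) (x y : E) : bregman f g x y ≤ K / 2 * ‖x - y‖ ^ 2 := by
  set v := x - y
  have hψ (t : ℝ) : HasDerivAt (fun s => f (y + s • v) - s * ⟪g y, v⟫)
      (⟪g (y + t • v), v⟫ - ⟪g y, v⟫) t :=
    (hg _).hasDerivAt_comp_add_smul.sub (by simpa using (hasDerivAt_id t).mul_const ⟪g y, v⟫)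
  have hB (t : ℝ) : HasDerivAt (fun s => f y + K / 2 * s ^ 2 * ‖v‖ ^ 2) (K * t * ‖v‖ ^ 2) t :=
    ((((hasDerivAt_pow 2 t).const_mul (K / 2 : ℝ)).mul_const (‖v‖ ^ 2)).const_add
      (f y)).congr_deriv (by ring)
  have hslope (t : ℝ) (ht : 0 ≤ t) : ⟪g (y + t • v), v⟫ - ⟪g y, v⟫ ≤ K * t * ‖v‖ ^ 2 := by
    have hlip : ‖g (y + t • v) - g y‖ ≤ K * (t * ‖v‖) := by
      simpa [dist_eq_norm, norm_smul, abs_of_nonneg ht] using hK.dist_le_mul (y + t • v) y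
    calc ⟪g (y + t • v), v⟫ - ⟪g y, v⟫ = ⟪g (y + t • v) - g y, v⟫ := (inner_sub_left ..).symm
      _ ≤ ‖g (y + t • v) - g y‖ * ‖v‖ := real_inner_le_norm _ _
      _ ≤ K * (t * ‖v‖) * ‖v‖ := by gcongr
      _ = K * t * ‖v‖ ^ 2 := by ring
  have := image_le_of_deriv_right_le_deriv_boundary
    (fun t _ => (hψ t).continuousAt.continuousWithinAt)
    (fun t _ => (hψ t).hasDerivWithinAt) (by simp)
    (fun t _ => (hB t).continuousAt.continuousWithinAt)
    (fun t _ => (hB t).hasDerivWithinAt) (fun t ht => hslope t ht.1)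
    (Set.right_mem_Icc.2 zero_le_one)
  simp only [one_smul, add_sub_cancel, one_mul, one_pow, mul_one, tsub_le_iff_right, v] at this
  rw [bregman]
  linarith

theorem norm_sub_sq_le_bregman {K : ℝ≥0} (hK0 : 0 < K) (hf : ConvexOn ℝ Set.univ f)
    (hg : ∀ x, HasGradientAt f (g x) x) (hK : LipschitzWith K g) (x y : E) :
    ‖g x - g y‖ ^ 2 ≤ 2 * K * bregman f g x y := by
  set u := g x - g y
  set z := x - (K⁻¹ : ℝ) • u
  have hup := bregman_le_of_lipschitzWith hg hK z x
  have hlow := bregman_nonneg hf hg z y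
  have hzx : z - x = -((K⁻¹ : ℝ) • u) := by simp [z]
  have hzy : z - y = (x - y) - (K⁻¹ : ℝ) • u := by simp [z]; abel
  have hu : ⟪g x, u⟫ - ⟪g y, u⟫ = ‖u‖ ^ 2 := by
    rw [← inner_sub_left, real_inner_self_eq_norm_sq]
  simp only [bregman, hzx, hzy, inner_neg_right, inner_sub_right, real_inner_smul_right,
    norm_neg, norm_smul, Real.norm_eq_abs, abs_inv, NNReal.abs_eq] at hup hlow ⊢
  have hK0' : (0 : ℝ) < K := hK0
  field_simp at hup hlow ⊢
  linarith

end Bregman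

theorem sum_sq_add_mask_mul_sub {ι : Type*} [Fintype ι] (a q : ι → ℝ) (c g h : ℝ)
    (hq : ∀ i, q i = 0 ∨ q i = 1) (ha : ∀ i, q i = 0 → a i = 0)
    (hqc : (∑ i, q i) * c = Fintype.card ι * h) (hsum : ∑ i, a i = Fintype.card ι * (g - h)) :
    ∑ i, (a i + q i * c - g) ^ 2
      = ∑ i, a i ^ 2 + Fintype.card ι * (2 * g * c - h * c - g ^ 2) := by
  have hterm (i : ι) : (a i + q i * c - g) ^ 2
      = a i ^ 2 + c * (q i * c) + g ^ 2 + 2 * (c - g) * a i - 2 * g * (q i * c) := by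
    rcases hq i with h0 | h1
    · rw [h0, ha i h0]; ring
    · rw [h1]; ring
  simp only [hterm, Finset.sum_add_distrib, Finset.sum_sub_distrib, ← Finset.mul_sum,
    ← Finset.sum_mul, Finset.sum_const, Finset.card_univ, nsmul_eq_mul]
  linear_combination (c - 2 * g) * hqc + 2 * (c - g) * hsum

theorem sum_norm_sq_add_mask_sub {ι κ : Type*} [Fintype ι] [Fintype κ]
    (a b : ι → EuclideanSpace ℝ κ) (p : ι → κ → ℝ) (c g h : EuclideanSpace ℝ κ)
    (hp : ∀ i v, p i v = 0 ∨ p i v = 1) (ha : ∀ i v, p i v = 0 → a i v = 0)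
    (hb : ∀ i v, b i v = p i v * c v) (hpc : ∀ v, (∑ i, p i v) * c v = Fintype.card ι * h v)
    (hsum : ∑ i, a i = (Fintype.card ι : ℝ) • (g - h)) :
    ∑ i, ‖a i + b i - g‖ ^ 2
      = ∑ i, ‖a i‖ ^ 2 + Fintype.card ι * (2 * ⟪g, c⟫ - ⟪h, c⟫ - ‖g‖ ^ 2) := by
  have hcoord (v : κ) := sum_sq_add_mask_mul_sub (a · v) (p · v) (c v) (g v) (h v)
    (hp · v) (ha · v) (hpc v) (by simpa using congr($hsum v))
  simp only [EuclideanSpace.norm_sq_eq, PiLp.inner_apply, Real.norm_eq_abs, sq_abs,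
    PiLp.add_apply, PiLp.sub_apply, hb]
  rw [Finset.sum_comm, Finset.sum_congr rfl fun v _ => hcoord v, Finset.sum_add_distrib,
    Finset.sum_comm, ← Finset.mul_sum]
  congr 2
  simp only [RCLike.inner_apply, conj_trivial, Finset.mul_sum, ← Finset.sum_sub_distrib]
  exact Finset.sum_congr rfl fun v _ => by ring

theorem sparse_svrg_variance_bound {n d : ℕ} (hn : 0 < n) (L : ℝ) (hL : 0 < L)
    (fi : Fin n → EuclideanSpace ℝ (Fin d) → ℝ)
    (gi : Fin n → EuclideanSpace ℝ (Fin d) → EuclideanSpace ℝ (Fin d))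
    (hgrad : ∀ i x, HasGradientAt (fi i) (gi i x) x)
    (hconv : ∀ i, ConvexOn ℝ Set.univ (fi i))
    (hlip : ∀ i, LipschitzWith L.toNNReal (gi i))
    (p : Fin n → Fin d → ℝ) (hp : ∀ i v, p i v = 0 ∨ p i v = 1)
    (hsupp : ∀ i x v, p i v = 0 → gi i x v = 0)
    (Dv : Fin d → ℝ) (hDv : ∀ v, Dv v * ((1 / n : ℝ) * ∑ i, p i v) = 1)
    (F : EuclideanSpace ℝ (Fin d) → ℝ) (hF : ∀ x, F x = (1 / n : ℝ) * ∑ i, fi i x)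
    (gF : EuclideanSpace ℝ (Fin d) → EuclideanSpace ℝ (Fin d))
    (hgF : ∀ x, gF x = (n : ℝ)⁻¹ • ∑ i, gi i x)
    (y xt : EuclideanSpace ℝ (Fin d))
    (Dg : EuclideanSpace ℝ (Fin d)) (hDg : ∀ v, Dg v = Dv v * gF xt v)
    (Di : Fin n → EuclideanSpace ℝ (Fin d))
    (hDi : ∀ i v, Di i v = p i v * (Dv v * gF xt v))
    (G : Fin n → EuclideanSpace ℝ (Fin d))
    (hG : ∀ i, G i = gi i y - gi i xt + Di i) :
    (1 / n : ℝ) * ∑ i, ‖G i - gF y‖ ^ 2 ≤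
      2 * L * (F xt - F y - ⟪gF y, xt - y⟫) - ‖gF y‖ ^ 2
        + 2 * ⟪gF y, Dg⟫ - ⟪gF xt, Dg⟫ := by
  have hn0 : (n : ℝ) ≠ 0 := by positivity
  have hvar := sum_norm_sq_add_mask_sub (fun i => gi i y - gi i xt) Di p Dg (gF y) (gF xt) hp
    (fun i v hv => by simp [hsupp i y v hv, hsupp i xt v hv]) (fun i v => by rw [hDi, hDg])
    (fun v => by
      have := hDv v
      field_simp at this
      rw [Fintype.card_fin, hDg]
      linear_combination gF xt v * this)
    (by simp [hgF, smul_sub, smul_inv_smul₀ hn0, Finset.sum_sub_distrib])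
  have hco : ∑ i, ‖gi i y - gi i xt‖ ^ 2 ≤ 2 * L * ∑ i, bregman (fi i) (gi i) xt y := by
    rw [Finset.mul_sum]
    refine Finset.sum_le_sum fun i _ => ?_
    simpa [norm_sub_rev, hL.le] using
      norm_sub_sq_le_bregman (Real.toNNReal_pos.2 hL) (hconv i) (hgrad i) (hlip i) xt y
  have hbreg : ∑ i, bregman (fi i) (gi i) xt y = n * (F xt - F y - ⟪gF y, xt - y⟫) := by
    simp only [bregman, hF, hgF, real_inner_smul_left, sum_inner, Finset.sum_sub_distrib]
    field_simp
  rw [Fintype.card_fin] at hvar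
  rw [hbreg] at hco
  have hmean : 1 / n * ∑ i, ‖gi i y - gi i xt‖ ^ 2 ≤ 2 * L * (F xt - F y - ⟪gF y, xt - y⟫) := by
    rw [one_div_mul_eq_div, div_le_iff₀ (by positivity)]
    linarith
  simp only [hG, hvar, mul_add, ← mul_assoc, one_div_mul_cancel hn0, one_mul]
  linarith
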